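/- arXiv:1210.3618 — 2 statements merged into one kernel-verified Lean document; each statement's English description precedes it below -/
import Mathlib

section
/- For each integer m ≥ 1 and each σ ≥ 3, the function t ↦ Im(ζ(σ + it)) has at least one zero in the interval ((2m - 1/2)·π/log 2, (2m + 1/2)·π/log 2). -/
open Complex

private lemma term_im (σ t : ℝ) (n : ℕ) (hn : 1 ≤ n) :
    (1 / (n:ℂ) ^ ((σ:ℂ) + t*I)).im
      = -((n:ℝ) ^ (-σ) * Real.sin (t * Real.log n)) := by
  have hn0 : (n:ℂ) ≠ 0 := Nat.cast_ne_zero.mpr (by omega)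
  have hnp : (0:ℝ) < n := by exact_mod_cast Nat.pos_of_ne_zero (by omega)
  rw [one_div, ← Complex.cpow_neg, Complex.cpow_def_of_ne_zero hn0, ← Complex.natCast_log,
    Complex.exp_im]
  simp only [Complex.mul_re, Complex.mul_im, Complex.neg_re, Complex.neg_im, Complex.add_re,
    Complex.add_im, Complex.ofReal_re, Complex.ofReal_im, Complex.mul_I_re, Complex.mul_I_im,
    Complex.I_re, Complex.I_im]
  rw [Real.rpow_def_of_pos hnp]
  ring_nf
  rw [Real.sin_neg]
  ring_nf

private lemma summable_cpow (σ t : ℝ) (hσ : 3 ≤ σ) :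
    Summable fun n : ℕ => 1 / (n:ℂ) ^ ((σ:ℂ) + t*I) := by
  rw [Complex.summable_one_div_nat_cpow]
  simp only [Complex.add_re, Complex.ofReal_re, Complex.mul_re, Complex.I_re, Complex.I_im,
    Complex.ofReal_im]
  norm_num; linarith

private lemma summable_im (σ t : ℝ) (hσ : 3 ≤ σ) :
    Summable fun n : ℕ => (1 / (n:ℂ) ^ ((σ:ℂ) + t*I)).im :=
  (Complex.hasSum_im (summable_cpow σ t hσ).hasSum).summable

private lemma tele_sum : ∑' n : ℕ, 1/(((n:ℝ)+2)*((n:ℝ)+3)*((n:ℝ)+4)) ≤ 1/12 := by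
  have hsum : Summable fun n : ℕ => 1/(((n:ℝ)+2)*((n:ℝ)+3)*((n:ℝ)+4)) := by
    apply Summable.of_nonneg_of_le (fun n => by positivity)
      (f := fun n : ℕ => 1/((n:ℝ)+1)^2)
    · intro n
      apply one_div_le_one_div_of_le (by positivity)
      have : (0:ℝ) ≤ (n:ℝ) := n.cast_nonneg
      nlinarith
    · have h2 : Summable (fun n : ℕ => 1/((n:ℝ))^2) := Real.summable_one_div_nat_pow.2 one_lt_two
      have := (summable_nat_add_iff (f := fun n : ℕ => 1/((n:ℝ))^2) 1).2 h2
      refine this.congr fun n => ?_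
      push_cast
      ring
  refine Summable.tsum_le_of_sum_le hsum ?_
  intro s
  obtain ⟨N, hN⟩ := s.exists_nat_subset_range
  set u : ℕ → ℝ := fun n => 1/(2*((n:ℝ)+2)*((n:ℝ)+3)) with hu
  calc ∑ i ∈ s, 1/(((i:ℝ)+2)*((i:ℝ)+3)*((i:ℝ)+4))
      ≤ ∑ i ∈ Finset.range N, 1/(((i:ℝ)+2)*((i:ℝ)+3)*((i:ℝ)+4)) :=
        Finset.sum_le_sum_of_subset_of_nonneg hN (fun i _ _ => by positivity)
    _ = ∑ i ∈ Finset.range N, (u i - u (i+1)) := by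
        refine Finset.sum_congr rfl fun i _ => ?_
        simp only [hu]
        push_cast
        have h2 : ((i:ℝ)+2) ≠ 0 := by positivity
        have h3 : ((i:ℝ)+3) ≠ 0 := by positivity
        have h4 : ((i:ℝ)+4) ≠ 0 := by positivity
        field_simp
        ring
    _ = u 0 - u N := Finset.sum_range_sub' u N
    _ ≤ u 0 := by
        have : 0 ≤ u N := by simp only [hu]; positivity
        linarith
    _ = 1/12 := by norm_num [hu]

private lemma w_summable : Summable fun n : ℕ => 1/(((n:ℝ)+2)*((n:ℝ)+3)*((n:ℝ)+4)) := by
  apply Summable.of_nonneg_of_le (fun n => by positivity)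
    (f := fun n : ℕ => 1/((n:ℝ)+1)^2)
  · intro n
    apply one_div_le_one_div_of_le (by positivity)
    have : (0:ℝ) ≤ (n:ℝ) := n.cast_nonneg
    nlinarith
  · have h2 : Summable (fun n : ℕ => 1/((n:ℝ))^2) := Real.summable_one_div_nat_pow.2 one_lt_two
    have := (summable_nat_add_iff (f := fun n : ℕ => 1/((n:ℝ))^2) 1).2 h2
    refine this.congr fun n => ?_
    push_cast
    ring

private lemma tail_bound (σ t : ℝ) (hσ : 3 ≤ σ) :
    |∑' n : ℕ, (1 / ((n+3:ℕ):ℂ) ^ ((σ:ℂ) + t*I)).im| ≤ 2/3 * (2:ℝ)^(-σ) := by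
  have htail : Summable fun n : ℕ => (1 / ((n+3:ℕ):ℂ) ^ ((σ:ℂ) + t*I)).im :=
    (summable_nat_add_iff (f := fun n : ℕ => (1 / (n:ℂ) ^ ((σ:ℂ) + t*I)).im) 3).2
      (summable_im σ t hσ)
  have habs : Summable fun n : ℕ => |(1 / ((n+3:ℕ):ℂ) ^ ((σ:ℂ) + t*I)).im| := htail.abs
  have hbound : ∀ n : ℕ, |(1 / ((n+3:ℕ):ℂ) ^ ((σ:ℂ) + t*I)).im|
      ≤ (2:ℝ)^(-σ) * (8 * (1/(((n:ℝ)+2)*((n:ℝ)+3)*((n:ℝ)+4)))) := by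
    intro n
    rw [term_im σ t (n+3) (by omega)]
    have hx : ((n+3:ℕ):ℝ) = (n:ℝ)+3 := by push_cast; ring
    rw [abs_neg, abs_mul, hx]
    have h1 : |((n:ℝ)+3) ^ (-σ)| = ((n:ℝ)+3) ^ (-σ) :=
      abs_of_nonneg (Real.rpow_nonneg (by positivity) _)
    rw [h1]
    have hsin : |Real.sin (t * Real.log ((n:ℝ)+3))| ≤ 1 := Real.abs_sin_le_one _
    have hpow : ((n:ℝ)+3) ^ (-σ) ≤ (2:ℝ)^(-σ) * (8 * (1/(((n:ℝ)+2)*((n:ℝ)+3)*((n:ℝ)+4)))) := by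
      have hhalf : (1:ℝ) ≤ ((n:ℝ)+3)/2 := by
        have : (0:ℝ) ≤ (n:ℝ) := n.cast_nonneg
        linarith
      have key : ((n:ℝ)+3) ^ (-σ) = (2:ℝ)^(-σ) * ((((n:ℝ)+3)/2)) ^ (-σ) := by
        rw [← Real.mul_rpow (by norm_num) (by linarith)]
        congr 1
        ring
      rw [key]
      refine mul_le_mul_of_nonneg_left ?_ (Real.rpow_nonneg (by norm_num) _)
      calc (((n:ℝ)+3)/2) ^ (-σ) ≤ (((n:ℝ)+3)/2) ^ (-(3:ℝ)) :=
            Real.rpow_le_rpow_of_exponent_le hhalf (by linarith)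
        _ = 8 * (1/(((n:ℝ)+3)^3)) := by
            rw [Real.rpow_neg (by linarith), show (3:ℝ) = ((3:ℕ):ℝ) by norm_num,
              Real.rpow_natCast]
            have h3 : ((n:ℝ)+3) ≠ 0 := by positivity
            field_simp
            ring
        _ ≤ 8 * (1/(((n:ℝ)+2)*((n:ℝ)+3)*((n:ℝ)+4))) := by
            have hle : (1/(((n:ℝ)+3)^3)) ≤ 1/(((n:ℝ)+2)*((n:ℝ)+3)*((n:ℝ)+4)) := by
              apply one_div_le_one_div_of_le (by positivity)
              have : (0:ℝ) ≤ (n:ℝ) := n.cast_nonneg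
              nlinarith
            linarith
    have hmul : ((n:ℝ)+3) ^ (-σ) * |Real.sin (t * Real.log ((n:ℝ)+3))|
        ≤ ((n:ℝ)+3) ^ (-σ) * 1 :=
      mul_le_mul_of_nonneg_left hsin (Real.rpow_nonneg (by positivity) _)
    rw [mul_one] at hmul
    exact hmul.trans hpow
  have hsum2 : Summable fun n : ℕ =>
      (2:ℝ)^(-σ) * (8 * (1/(((n:ℝ)+2)*((n:ℝ)+3)*((n:ℝ)+4)))) :=
    (w_summable.mul_left _).mul_left _
  calc |∑' n : ℕ, (1 / ((n+3:ℕ):ℂ) ^ ((σ:ℂ) + t*I)).im|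
      ≤ ∑' n : ℕ, |(1 / ((n+3:ℕ):ℂ) ^ ((σ:ℂ) + t*I)).im| := by
        have := norm_tsum_le_tsum_norm (f := fun n : ℕ =>
          (1 / ((n+3:ℕ):ℂ) ^ ((σ:ℂ) + t*I)).im)
          (by simpa only [Real.norm_eq_abs] using habs)
        simpa only [Real.norm_eq_abs] using this
    _ ≤ ∑' n : ℕ, (2:ℝ)^(-σ) * (8 * (1/(((n:ℝ)+2)*((n:ℝ)+3)*((n:ℝ)+4)))) :=
        Summable.tsum_le_tsum hbound habs hsum2
    _ = (2:ℝ)^(-σ) * 8 * ∑' n : ℕ, 1/(((n:ℝ)+2)*((n:ℝ)+3)*((n:ℝ)+4)) := by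
        rw [← tsum_mul_left]
        congr 1; ext n; ring
    _ ≤ (2:ℝ)^(-σ) * 8 * (1/12) :=
        mul_le_mul_of_nonneg_left tele_sum (by positivity)
    _ ≤ 2/3 * (2:ℝ)^(-σ) := by
        have : (0:ℝ) < (2:ℝ)^(-σ) := Real.rpow_pos_of_pos (by norm_num) _
        linarith

private lemma zeta_im_repr (σ t : ℝ) (hσ : 3 ≤ σ) :
    (riemannZeta ((σ:ℂ) + t*I)).im
      = ∑' n : ℕ, (1 / (n:ℂ) ^ ((σ:ℂ) + t*I)).im := by
  rw [zeta_eq_tsum_one_div_nat_cpow (by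
    simp only [Complex.add_re, Complex.ofReal_re, Complex.mul_re, Complex.I_re, Complex.I_im,
      Complex.ofReal_im]; norm_num; linarith)]
  exact Complex.im_tsum (summable_cpow σ t hσ)

private lemma zeta_im_eq (σ t : ℝ) (hσ : 3 ≤ σ) :
    (riemannZeta ((σ:ℂ) + t*I)).im
      = -((2:ℝ)^(-σ) * Real.sin (t * Real.log 2))
        + ∑' n : ℕ, (1 / ((n+3:ℕ):ℂ) ^ ((σ:ℂ) + t*I)).im := by
  have hs0 : ((σ:ℂ) + t*I) ≠ 0 := by
    intro h
    have := congrArg Complex.re h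
    simp at this
    linarith
  have hs : Summable fun n : ℕ => (1 / (n:ℂ) ^ ((σ:ℂ) + t*I)).im := summable_im σ t hσ
  have hs1 : Summable fun n : ℕ => (1 / ((n+1:ℕ):ℂ) ^ ((σ:ℂ) + t*I)).im :=
    (summable_nat_add_iff (f := fun n : ℕ => (1 / (n:ℂ) ^ ((σ:ℂ) + t*I)).im) 1).2 hs
  have hs2 : Summable fun n : ℕ => (1 / ((n+1+1:ℕ):ℂ) ^ ((σ:ℂ) + t*I)).im :=
    (summable_nat_add_iff (f := fun n : ℕ => (1 / (n:ℂ) ^ ((σ:ℂ) + t*I)).im) 2).2 hs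
  rw [zeta_im_repr σ t hσ, Summable.tsum_eq_zero_add hs, Summable.tsum_eq_zero_add hs1, Summable.tsum_eq_zero_add hs2]
  have h0 : (1 / ((0:ℕ):ℂ) ^ ((σ:ℂ) + t*I)).im = 0 := by
    rw [Nat.cast_zero, Complex.zero_cpow hs0]
    simp
  have h1 : (1 / ((0+1:ℕ):ℂ) ^ ((σ:ℂ) + t*I)).im = 0 := by
    rw [term_im σ t (0+1) (by omega)]
    norm_num
  have h2 : (1 / ((0+1+1:ℕ):ℂ) ^ ((σ:ℂ) + t*I)).im
      = -((2:ℝ)^(-σ) * Real.sin (t * Real.log 2)) := by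
    rw [term_im σ t (0+1+1) (by omega)]
    norm_num
  rw [h0, h1, h2]
  have h3 : ∀ n : ℕ, n+1+1+1 = n+3 := fun n => by omega
  simp only [h3]
  ring

theorem zeta_im_zero_in_strip (m : ℕ) (hm : 1 ≤ m) (σ : ℝ) (hσ : 3 ≤ σ) :
    ∃ t ∈ Set.Ioo ((2 * (m : ℝ) - 1 / 2) * Real.pi / Real.log 2)
        ((2 * (m : ℝ) + 1 / 2) * Real.pi / Real.log 2),
      (riemannZeta (σ + t * I)).im = 0 := by
  have hL : (0:ℝ) < Real.log 2 := Real.log_pos one_lt_two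
  have hπ : (0:ℝ) < Real.pi := Real.pi_pos
  set a := (2 * (m : ℝ) - 1 / 2) * Real.pi / Real.log 2 with ha
  set b := (2 * (m : ℝ) + 1 / 2) * Real.pi / Real.log 2 with hb
  have hab : a < b := by
    rw [ha, hb, div_lt_div_iff₀ hL hL]
    nlinarith
  have h2pos : (0:ℝ) < (2:ℝ)^(-σ) := Real.rpow_pos_of_pos (by norm_num) _
  have hsa : Real.sin (a * Real.log 2) = -1 := by
    have haL : a * Real.log 2 = (m:ℝ)*(2*Real.pi) - Real.pi/2 := by
      rw [ha, div_mul_cancel₀ _ hL.ne']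
      ring
    rw [haL, Real.sin_sub_pi_div_two, Real.cos_nat_mul_two_pi]
  have hsb : Real.sin (b * Real.log 2) = 1 := by
    have hbL : b * Real.log 2 = (m:ℝ)*(2*Real.pi) + Real.pi/2 := by
      rw [hb, div_mul_cancel₀ _ hL.ne']
      ring
    rw [hbL, Real.sin_add_pi_div_two, Real.cos_nat_mul_two_pi]
  have hfa : 0 < (riemannZeta ((σ:ℂ) + a*I)).im := by
    rw [zeta_im_eq σ a hσ, hsa, mul_neg_one, neg_neg]
    have h := abs_le.1 (tail_bound σ a hσ)
    linarith [h.1]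
  have hfb : (riemannZeta ((σ:ℂ) + b*I)).im < 0 := by
    rw [zeta_im_eq σ b hσ, hsb, mul_one]
    have h := abs_le.1 (tail_bound σ b hσ)
    linarith [h.2]
  have hcont : ContinuousOn (fun t : ℝ => (riemannZeta ((σ:ℂ) + t*I)).im) (Set.Icc a b) := by
    have hc : ∀ x : ℝ, ContinuousAt (fun t : ℝ => (riemannZeta ((σ:ℂ) + t*I)).im) x := by
      intro x
      have hne : (σ:ℂ) + x*I ≠ 1 := by
        intro h
        have := congrArg Complex.re h
        simp at this
        linarith
      have h1 : ContinuousAt (fun t : ℝ => (σ:ℂ) + t*I) x := by fun_prop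
      have h2 : ContinuousAt (riemannZeta ∘ fun t : ℝ => (σ:ℂ) + t*I) x :=
        ContinuousAt.comp (f := fun t : ℝ => (σ:ℂ) + t*I) (x := x)
          (differentiableAt_riemannZeta hne).continuousAt h1
      have h3 : ContinuousAt (Complex.im ∘ riemannZeta ∘ fun t : ℝ => (σ:ℂ) + t*I) x :=
        ContinuousAt.comp (x := x) Complex.continuous_im.continuousAt h2
      exact h3
    exact Continuous.continuousOn (continuous_iff_continuousAt.2 hc)
  have h0mem : (0:ℝ) ∈ Set.Ioo ((riemannZeta ((σ:ℂ) + b*I)).im)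
      ((riemannZeta ((σ:ℂ) + a*I)).im) := ⟨hfb, hfa⟩
  obtain ⟨t, ht, hft⟩ := intermediate_value_Ioo' (le_of_lt hab) hcont h0mem
  exact ⟨t, ht, hft⟩
end

section
/- For each σ ≥ 3, the number of zeros of t ↦ Im(ζ(σ + it)) in the interval (0, T] is at least ⌊T log 2/(2π)⌋ for every T > 0 (i.e., the strip boundaries have density at least log 2/(2π) per unit height). -/
open Complex

/-!
For `Re s > 1`, `ζ(s) = 1 + 2⁻ˢ + ∑_{n ≥ 3} n⁻ˢ`, and for `σ = Re s ≥ 3` the tail is at most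
`(2/3) 2^(-σ)`, because `(2/n)^σ ≤ (2/n)^3` and `∑_{n ≥ 3} n⁻³ ≤ 1/12`. Since
`Im 2^(-σ-it) = -2^(-σ) sin (t log 2)`, the imaginary part of `ζ(σ + it)` is negative where
`sin (t log 2) = 1` and positive where it is `-1`; by the intermediate value theorem it vanishes
in each of the `⌊T log 2 / 2π⌋` full periods of `sin (t log 2)` inside `(0, T]`.
-/

open Finset in
theorem sum_range_one_div_add_three_pow_three_le (n : ℕ) :
    ∑ i ∈ range n, 1 / ((i : ℝ) + 3) ^ 3 ≤ 1 / 12 := by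
  -- `1 / k ^ 3 ≤ 1 / ((k - 1) k (k + 1))`, and the right-hand side telescopes
  let g : ℕ → ℝ := fun i => 1 / (2 * ((i : ℝ) + 2) * ((i : ℝ) + 3))
  have step (i : ℕ) : 1 / ((i : ℝ) + 3) ^ 3 ≤ g i - g (i + 1) := by
    have hg : g i - g (i + 1) = 1 / (((i : ℝ) + 2) * ((i : ℝ) + 3) * ((i : ℝ) + 4)) := by
      simp only [g]; push_cast; field_simp; ring
    rw [hg]
    exact one_div_le_one_div_of_le (by positivity) (by nlinarith)
  calc ∑ i ∈ range n, 1 / ((i : ℝ) + 3) ^ 3 ≤ ∑ i ∈ range n, (g i - g (i + 1)) :=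
        sum_le_sum fun i _ => step i
    _ = g 0 - g n := sum_range_sub' g n
    _ ≤ 1 / 12 := by norm_num [g]; positivity

theorem rpow_neg_le_of_two_le {x σ : ℝ} (hx : 2 ≤ x) (hσ : 3 ≤ σ) :
    x ^ (-σ) ≤ 8 * 2 ^ (-σ) / x ^ 3 := by
  have hx0 : 0 < x := by linarith
  calc x ^ (-σ) = 2 ^ (-σ) * (2 / x) ^ σ := by
        rw [Real.div_rpow zero_le_two hx0.le, Real.rpow_neg zero_le_two, Real.rpow_neg hx0.le]
        field_simp
    _ ≤ 2 ^ (-σ) * (2 / x) ^ (3 : ℝ) :=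
        mul_le_mul_of_nonneg_left
          (Real.rpow_le_rpow_of_exponent_ge (by positivity) ((div_le_one hx0).2 hx) hσ)
          (by positivity)
    _ = 8 * 2 ^ (-σ) / x ^ 3 := by
        rw [show (3 : ℝ) = (3 : ℕ) by norm_num, Real.rpow_natCast]; ring

open Finset in
theorem sum_range_add_three_rpow_neg_le {σ : ℝ} (hσ : 3 ≤ σ) (n : ℕ) :
    ∑ i ∈ range n, ((i : ℝ) + 3) ^ (-σ) ≤ 2 / 3 * 2 ^ (-σ) :=
  calc ∑ i ∈ range n, ((i : ℝ) + 3) ^ (-σ)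
      ≤ ∑ i ∈ range n, 8 * 2 ^ (-σ) * (1 / ((i : ℝ) + 3) ^ 3) :=
        sum_le_sum fun i _ =>
          (rpow_neg_le_of_two_le (by linarith [i.cast_nonneg (α := ℝ)]) hσ).trans_eq (by ring)
    _ = 8 * 2 ^ (-σ) * ∑ i ∈ range n, 1 / ((i : ℝ) + 3) ^ 3 := (mul_sum ..).symm
    _ ≤ 8 * 2 ^ (-σ) * (1 / 12) := by gcongr; exact sum_range_one_div_add_three_pow_three_le n
    _ = 2 / 3 * 2 ^ (-σ) := by ring

theorem riemannZeta_eq_one_add_two_cpow_neg_add_tsum {s : ℂ} (hs : 1 < s.re) :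
    riemannZeta s = 1 + 2 ^ (-s) + ∑' n : ℕ, 1 / ((n : ℂ) + 3) ^ s := by
  have hsum : Summable fun n : ℕ => 1 / ((n : ℂ) + 1) ^ s := by
    simpa using (summable_nat_add_iff 1).2 (Complex.summable_one_div_nat_cpow.2 hs)
  rw [zeta_eq_tsum_one_div_nat_add_one_cpow hs, ← hsum.sum_add_tsum_nat_add 2]
  norm_num [Finset.sum_range_succ, cpow_neg, add_assoc]

theorem norm_riemannZeta_sub_one_sub_two_cpow_neg_le {s : ℂ} (hs : 3 ≤ s.re) :
    ‖riemannZeta s - 1 - 2 ^ (-s)‖ ≤ 2 / 3 * 2 ^ (-s.re) := by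
  have hnorm (n : ℕ) : ‖1 / ((n : ℂ) + 3) ^ s‖ = ((n : ℝ) + 3) ^ (-s.re) := by
    rw [norm_div, norm_one, show (n : ℂ) + 3 = ((n + 3 : ℝ) : ℂ) by push_cast; rfl,
      norm_cpow_eq_rpow_re_of_pos (by positivity), Real.rpow_neg (by positivity), one_div]
  have hnonneg (n : ℕ) : 0 ≤ ((n : ℝ) + 3) ^ (-s.re) := by positivity
  have hsum := summable_of_sum_range_le hnonneg (sum_range_add_three_rpow_neg_le hs)
  rw [riemannZeta_eq_one_add_two_cpow_neg_add_tsum (by linarith),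
    show ∀ a b c : ℂ, a + b + c - a - b = c from fun _ _ _ => by ring]
  exact (tsum_of_norm_bounded hsum.hasSum fun n => (hnorm n).le).trans
    (Real.tsum_le_of_sum_range_le hnonneg (sum_range_add_three_rpow_neg_le hs))

theorem im_ofReal_cpow {x : ℝ} (hx : 0 < x) (s : ℂ) :
    ((x : ℂ) ^ s).im = x ^ s.re * Real.sin (s.im * Real.log x) := by
  rw [cpow_def_of_ne_zero (ofReal_ne_zero.2 hx.ne'), ← ofReal_log hx.le, exp_im, re_ofReal_mul,
    im_ofReal_mul, Real.rpow_def_of_pos hx, mul_comm s.im]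

theorem abs_im_riemannZeta_add_two_rpow_neg_mul_sin_le {σ : ℝ} (hσ : 3 ≤ σ) (t : ℝ) :
    |(riemannZeta (σ + t * I)).im + 2 ^ (-σ) * Real.sin (t * Real.log 2)| ≤ 2 / 3 * 2 ^ (-σ) := by
  have hbound := norm_riemannZeta_sub_one_sub_two_cpow_neg_le (s := σ + t * I) (by simpa using hσ)
  have him : ((2 : ℂ) ^ (-(σ + t * I))).im = -(2 ^ (-σ) * Real.sin (t * Real.log 2)) := by
    rw [show (2 : ℂ) = ((2 : ℝ) : ℂ) by norm_num, im_ofReal_cpow two_pos]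
    simp [neg_mul, Real.sin_neg]
  calc |(riemannZeta (σ + t * I)).im + 2 ^ (-σ) * Real.sin (t * Real.log 2)|
      = |(riemannZeta (σ + t * I) - 1 - 2 ^ (-(σ + t * I))).im| := by
        rw [sub_im, sub_im, him, one_im, sub_zero, sub_neg_eq_add]
    _ ≤ 2 / 3 * 2 ^ (-σ) := (abs_im_le_norm _).trans (by simpa using hbound)

theorem im_riemannZeta_neg_of_sin_eq_one {σ t : ℝ} (hσ : 3 ≤ σ)
    (ht : Real.sin (t * Real.log 2) = 1) : (riemannZeta (σ + t * I)).im < 0 := by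
  have h := (abs_le.1 (abs_im_riemannZeta_add_two_rpow_neg_mul_sin_le hσ t)).2
  rw [ht] at h
  linarith [Real.rpow_pos_of_pos two_pos (-σ)]

theorem im_riemannZeta_pos_of_sin_eq_neg_one {σ t : ℝ} (hσ : 3 ≤ σ)
    (ht : Real.sin (t * Real.log 2) = -1) : 0 < (riemannZeta (σ + t * I)).im := by
  have h := (abs_le.1 (abs_im_riemannZeta_add_two_rpow_neg_mul_sin_le hσ t)).1
  rw [ht] at h
  linarith [Real.rpow_pos_of_pos two_pos (-σ)]

theorem continuous_riemannZeta_vertical {σ : ℝ} (hσ : σ ≠ 1) :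
    Continuous fun t : ℝ => riemannZeta (σ + t * I) := by
  refine continuous_iff_continuousAt.2 fun t => ?_
  have hne : (σ : ℂ) + t * I ≠ 1 := fun h => hσ (by simpa using congrArg re h)
  exact (differentiableAt_riemannZeta hne).continuousAt.comp
    (f := fun t : ℝ => (σ : ℂ) + t * I) (by fun_prop)

theorem exists_strictMono_zeros_of_sign_change {f : ℝ → ℝ} (hf : Continuous f) {a b : ℕ → ℝ}
    (hab : ∀ m, a m ≤ b m) (hba : ∀ m, b m ≤ a (m + 1)) (hneg : ∀ m, f (a m) < 0)
    (hpos : ∀ m, 0 < f (b m)) :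
    ∃ c : ℕ → ℝ, StrictMono c ∧ ∀ m, c m ∈ Set.Ioo (a m) (b m) ∧ f (c m) = 0 := by
  choose c hc hfc using fun m => intermediate_value_Ioo (hab m) hf.continuousOn ⟨hneg m, hpos m⟩
  exact ⟨c, strictMono_nat_of_lt_succ fun m => ((hc m).2.trans_le (hba m)).trans (hc (m + 1)).1,
    fun m => ⟨hc m, hfc m⟩⟩

theorem zeta_im_zeros_density (σ : ℝ) (hσ : 3 ≤ σ) (T : ℝ) (hT : 0 < T) :
    ∃ S : Finset ℝ, (∀ t ∈ S, t ∈ Set.Ioc 0 T ∧ (riemannZeta (σ + t * I)).im = 0) ∧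
      (⌊T * Real.log 2 / (2 * Real.pi)⌋.toNat ≤ S.card) := by
  have hL : 0 < Real.log 2 := Real.log_pos one_lt_two
  rw [Int.floor_toNat]
  set N := ⌊T * Real.log 2 / (2 * Real.pi)⌋₊
  have hN : (N : ℝ) * (2 * Real.pi) ≤ T * Real.log 2 :=
    (le_div_iff₀ (by positivity)).1 (Nat.floor_le (by positivity))
  -- `sin (t * log 2)` equals `1` at `t = a m` and `-1` at `t = b m`
  let a : ℕ → ℝ := fun m => (Real.pi / 2 + m * (2 * Real.pi)) / Real.log 2
  let b : ℕ → ℝ := fun m => (Real.pi / 2 + Real.pi + m * (2 * Real.pi)) / Real.log 2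
  obtain ⟨c, hc_mono, hc⟩ := exists_strictMono_zeros_of_sign_change (a := a) (b := b)
    (continuous_im.comp (continuous_riemannZeta_vertical (by linarith)))
    (fun m => div_le_div_of_nonneg_right (by linarith [Real.pi_pos]) hL.le)
    (fun m => div_le_div_of_nonneg_right (by push_cast; linarith [Real.pi_pos]) hL.le)
    (fun m => im_riemannZeta_neg_of_sin_eq_one hσ (by
      simp only [a, div_mul_cancel₀ _ hL.ne', Real.sin_add_nat_mul_two_pi, Real.sin_pi_div_two]))
    (fun m => im_riemannZeta_pos_of_sin_eq_neg_one hσ (by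
      simp only [b, div_mul_cancel₀ _ hL.ne', Real.sin_add_nat_mul_two_pi, Real.sin_add_pi,
        Real.sin_pi_div_two]))
  refine ⟨(Finset.range N).image c, ?_, by
    rw [Finset.card_image_of_injective _ hc_mono.injective, Finset.card_range]⟩
  simp only [Finset.mem_image, Finset.mem_range]
  rintro _ ⟨m, hm, rfl⟩
  have hbm : b m ≤ T := by
    have hm' : (m : ℝ) + 1 ≤ N := by exact_mod_cast hm
    rw [div_le_iff₀ hL]
    nlinarith [Real.pi_pos]
  exact ⟨⟨(by positivity : 0 < a m).trans (hc m).1.1, (hc m).1.2.le.trans hbm⟩, (hc m).2⟩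
end
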